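/- Let α, β be coprime positive integers and let [(0, i₁), (j₀, j₁)] be a reduced (α, β)-balanced couple with nonnegative entries. Then it is an (α, β)-fundamental couple; in particular i₁ is a gap of ⟨α, β⟩. -/

import Mathlib

/-- Membership in the numerical semigroup ⟨α, β⟩ = ℕ₀α + ℕ₀β, viewed inside ℤ. -/
def SG (α β : ℕ) : Set ℤ := {e : ℤ | ∃ a b : ℕ, e = (a : ℤ) * α + (b : ℤ) * β}

/-- A gap of ⟨α, β⟩: a positive integer not in the semigroup. -/
def IsGap (α β : ℕ) (e : ℤ) : Prop := 0 < e ∧ e ∉ SG α β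

/-- Definition 3.10: an (α,β)-fundamental couple, given by two integer sequences
`I, J` (indexed by `0, …, m`; values beyond `m` are irrelevant). -/
def IsFundamentalCouple (α β m : ℕ) (I J : ℕ → ℤ) : Prop :=
  -- (0)
  I 0 = 0 ∧
  -- (1)
  (∀ k, 1 ≤ k → k ≤ m → IsGap α β (I k)) ∧
  (∀ k, 1 ≤ k → k < m → IsGap α β (J k)) ∧
  J 0 ≤ (α : ℤ) * β ∧ J m ≤ (α : ℤ) * β ∧
  -- (2)
  (∀ k, k ≤ m → (α : ℤ) ∣ (J k - I k) ∧ I k < J k) ∧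
  (∀ k, k < m → (β : ℤ) ∣ (J k - I (k + 1)) ∧ I (k + 1) < J k) ∧
  ((β : ℤ) ∣ (J m - I 0) ∧ I 0 ≤ J m) ∧
  -- (3)
  (∀ k l, 1 ≤ k → k < l → l ≤ m → IsGap α β |I k - I l|)

/-- Definition 3.22 a): an (α,β)-balanced couple. -/
def IsBalancedCouple (α β m : ℕ) (I J : ℕ → ℤ) : Prop :=
  (∀ k, k ≤ m → (α : ℤ) ∣ (J k - I k) ∧ I k ≤ J k) ∧
  (∀ k, k < m → (β : ℤ) ∣ (J k - I (k + 1)) ∧ I (k + 1) ≤ J k) ∧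
  ((β : ℤ) ∣ (J m - I 0) ∧ I 0 ≤ J m)

/-- Definition 3.22 b): a reduced (α,β)-balanced couple. -/
def IsReducedBalancedCouple (α β m : ℕ) (I J : ℕ → ℤ) : Prop :=
  IsBalancedCouple α β m I J ∧
  (∀ k, k ≤ m → I k < J k) ∧
  (∀ k, k < m → I (k + 1) < J k) ∧
  I 0 < J m ∧
  (∀ k, 1 ≤ k → k ≤ m → min (J (k - 1) - I k) (J k - I k) < (α : ℤ) * β) ∧
  min (J m - I 0) (J 0 - I 0) < (α : ℤ) * β ∧
  (∀ k, k < m → min (J k - I k) (J k - I (k + 1)) < (α : ℤ) * β) ∧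
  min (J m - I m) (J m - I 0) < (α : ℤ) * β

/-- Condition (⋆) for a coefficient sequence `h : ℤ → ℤ`. -/
def StarCondition (α β : ℕ) (h : ℤ → ℤ) : Prop :=
  ∀ (m : ℕ) (I J : ℕ → ℤ), IsFundamentalCouple α β m I J →
    ∀ n : ℤ, ∑ k ∈ Finset.range (m + 1), h (I k + n) ≤
      ∑ k ∈ Finset.range (m + 1), h (J k + n)

/-!
Write `i = I 1`, `j₀ = J 0`, `j₁ = J 1`, so that `α ∣ j₀`, `β ∣ j₀ - i`, `β ∣ j₁`, `α ∣ j₁ - i`.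
If `i = aα + bβ` lay in `⟨α, β⟩`, then `j₀ - aα` would be a positive multiple of `αβ`, and so
would `j₁ - bβ`; hence `j₀, j₁ ≥ αβ`, against reducedness. Conversely, if `j₀ = aα > αβ` while
`j₀ - i = bβ < αβ`, then `i = (a - β)α + (α - b)β` lies in `⟨α, β⟩`; so `j₀ ≤ αβ`, and likewise
`j₁ ≤ αβ`.
-/

theorem SG_comm (α β : ℕ) : SG β α = SG α β := by
  ext e
  constructor <;> rintro ⟨a, b, rfl⟩ <;> exact ⟨b, a, add_comm _ _⟩

theorem zero_mem_SG (α β : ℕ) : (0 : ℤ) ∈ SG α β := ⟨0, 0, by simp⟩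

theorem mem_SG_of_dvd_of_dvd_sub {α β : ℕ} (hα : 0 < α) (hβ : 0 < β) {x e : ℤ}
    (hαx : (α : ℤ) ∣ x) (hβx : (β : ℤ) ∣ x - e) (hx : (α : ℤ) * β ≤ x)
    (hxe : x - e ≤ (α : ℤ) * β) : e ∈ SG α β := by
  obtain ⟨a, rfl⟩ := hαx
  obtain ⟨b, hb⟩ := hβx
  have hαZ : (0 : ℤ) < α := by exact_mod_cast hα
  have hβZ : (0 : ℤ) < β := by exact_mod_cast hβ
  have haβ : (β : ℤ) ≤ a := le_of_mul_le_mul_left (by linarith) hαZ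
  have hbα : b ≤ (α : ℤ) := le_of_mul_le_mul_left (by linarith) hβZ
  refine ⟨(a - β).toNat, (α - b).toNat, ?_⟩
  rw [Int.toNat_of_nonneg (by omega), Int.toNat_of_nonneg (by omega)]
  linear_combination -hb

theorem mul_le_of_dvd_of_dvd_sub_of_mem_SG {α β : ℕ} (hcop : Nat.Coprime α β) {x e : ℤ}
    (he : e ∈ SG α β) (hex : e < x) (hαx : (α : ℤ) ∣ x) (hβx : (β : ℤ) ∣ x - e) :
    (α : ℤ) * β ≤ x := by
  obtain ⟨a, b, rfl⟩ := he
  have hbβ : (0 : ℤ) ≤ b * β := by positivity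
  have hα_dvd : (α : ℤ) ∣ x - a * α := dvd_sub hαx (dvd_mul_left _ _)
  have hβ_dvd : (β : ℤ) ∣ x - a * α := by
    rw [show x - a * α = (x - (a * α + b * β)) + b * β by ring]
    exact dvd_add hβx (dvd_mul_left _ _)
  have hαβ_dvd : (α : ℤ) * β ∣ x - a * α :=
    (Nat.isCoprime_iff_coprime.mpr hcop).mul_dvd hα_dvd hβ_dvd
  have hle := Int.le_of_dvd (by linarith) hαβ_dvd
  have haα : (0 : ℤ) ≤ a * α := by positivity
  linarith

/-- Lemma 3.24 d): any reduced (α,β)-balanced couple `[(0, i₁), (j₀, j₁)]` with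
nonnegative entries is fundamental (in particular `i₁` is a gap of ⟨α, β⟩). -/
theorem reduced_balanced_length_two_fundamental (α β : ℕ) (hα : 0 < α) (hβ : 0 < β)
    (hcop : Nat.Coprime α β) (I J : ℕ → ℤ)
    (hRB : IsReducedBalancedCouple α β 1 I J)
    (hnonneg : ∀ k, k ≤ 1 → 0 ≤ I k ∧ 0 ≤ J k)
    (hI0 : I 0 = 0) :
    IsFundamentalCouple α β 1 I J ∧ IsGap α β (I 1) := by
  obtain ⟨⟨hA, hB, hC⟩, hIJ, hIJ', -, -, hmin, hred₀, hred₁⟩ := hRB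
  have hα₀ : (α : ℤ) ∣ J 0 := by simpa [hI0] using (hA 0 zero_le_one).1
  have hα₁ : (α : ℤ) ∣ J 1 - I 1 := (hA 1 le_rfl).1
  have hβ₀ : (β : ℤ) ∣ J 0 - I 1 := (hB 0 zero_lt_one).1
  have hβ₁ : (β : ℤ) ∣ J 1 := by simpa [hI0] using hC.1
  have hI₁ : 0 ≤ I 1 := (hnonneg 1 le_rfl).1
  have hR₀ : J 0 - I 1 < (α : ℤ) * β := by
    have := hred₀ 0 zero_lt_one
    simp only [hI0, sub_zero, zero_add] at this
    omega
  have hR₁ : J 1 - I 1 < (α : ℤ) * β := by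
    simp only [hI0, sub_zero] at hred₁
    omega
  have hnot : I 1 ∉ SG α β := fun hmem => by
    have h₀ := mul_le_of_dvd_of_dvd_sub_of_mem_SG hcop hmem (hIJ' 0 zero_lt_one) hα₀ hβ₀
    have h₁ := mul_le_of_dvd_of_dvd_sub_of_mem_SG hcop.symm (SG_comm α β ▸ hmem)
      (hIJ 1 le_rfl) hβ₁ hα₁
    simp only [hI0, sub_zero] at hmin
    rw [mul_comm] at h₁
    omega
  have hgap : IsGap α β (I 1) :=
    ⟨lt_of_le_of_ne hI₁ fun h => hnot (h ▸ zero_mem_SG α β), hnot⟩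
  have hJ₀ : J 0 ≤ (α : ℤ) * β := le_of_not_gt fun h =>
    hnot (mem_SG_of_dvd_of_dvd_sub hα hβ hα₀ hβ₀ h.le hR₀.le)
  have hJ₁ : J 1 ≤ (α : ℤ) * β := le_of_not_gt fun h => hnot <| SG_comm α β ▸
    mem_SG_of_dvd_of_dvd_sub hβ hα hβ₁ hα₁ (by linarith) (by linarith)
  refine ⟨⟨hI0, fun k hk hk' => ?_, fun k hk hk' => by omega, hJ₀, hJ₁,
    fun k hk => ⟨(hA k hk).1, hIJ k hk⟩, fun k hk => ⟨(hB k hk).1, hIJ' k hk⟩, hC,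
    fun k l hk hkl hl => by omega⟩, hgap⟩
  obtain rfl : k = 1 := by omega
  exact hgap
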